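/- Let N ≥ 1 be an integer, let p, q be real exponents with 1 < q < p, let Ω ⊆ ℝ^N be a domain, and let f be locally in L^{pN/(pN+p-N)} on Ω. Suppose u, v ∈ C¹(Ω) satisfy -Δ_p u - Δ_q u ≥ f weakly in Ω and -Δ_p v - Δ_q v ≤ f weakly in Ω (the latter meaning the reversed integral inequality for all nonnegative test functions). Suppose moreover that for every ε > 0 the set {x ∈ Ω : u(x) - v(x) + ε ≤ 0} is compact and contained in Ω. Then u ≥ v everywhere in Ω. -/

import Mathlib

open MeasureTheory Filter Metric

noncomputable section

/-- `u` satisfies `-Δ_p u - Δ_q u ≥ f` weakly in `Ω`: for every nonnegative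
`φ ∈ C¹_c(Ω)`, `∫_Ω |∇u|^{p-2} ∇u·∇φ + ∫_Ω |∇u|^{q-2} ∇u·∇φ ≥ ∫_Ω f φ`. -/
def WeakPQSuper (N : ℕ) (p q : ℝ) (Ω : Set (EuclideanSpace ℝ (Fin N)))
    (u f : EuclideanSpace ℝ (Fin N) → ℝ) : Prop :=
  ∀ φ : EuclideanSpace ℝ (Fin N) → ℝ,
    ContDiff ℝ 1 φ → HasCompactSupport φ → tsupport φ ⊆ Ω → (∀ x, 0 ≤ φ x) →
    ∫ x in Ω, f x * φ x ≤
      (∫ x in Ω, ‖gradient u x‖ ^ (p - 2) * (inner ℝ (gradient u x) (gradient φ x) : ℝ)) +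
      ∫ x in Ω, ‖gradient u x‖ ^ (q - 2) * (inner ℝ (gradient u x) (gradient φ x) : ℝ)

/-- An exterior domain: a nonempty open connected set containing `{x : |x| > R}`
for some `R > 0`. -/
def IsExteriorDomain {N : ℕ} (Ω : Set (EuclideanSpace ℝ (Fin N))) : Prop :=
  IsOpen Ω ∧ IsConnected Ω ∧ ∃ R > 0, {x : EuclideanSpace ℝ (Fin N) | R < ‖x‖} ⊆ Ω

/-- `u` satisfies `-Δ_p u - Δ_q u ≤ f` weakly in `Ω`. -/
def WeakPQSub (N : ℕ) (p q : ℝ) (Ω : Set (EuclideanSpace ℝ (Fin N)))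
    (u f : EuclideanSpace ℝ (Fin N) → ℝ) : Prop :=
  ∀ φ : EuclideanSpace ℝ (Fin N) → ℝ,
    ContDiff ℝ 1 φ → HasCompactSupport φ → tsupport φ ⊆ Ω → (∀ x, 0 ≤ φ x) →
    (∫ x in Ω, ‖gradient u x‖ ^ (p - 2) * (inner ℝ (gradient u x) (gradient φ x) : ℝ)) +
      (∫ x in Ω, ‖gradient u x‖ ^ (q - 2) * (inner ℝ (gradient u x) (gradient φ x) : ℝ)) ≤
    ∫ x in Ω, f x * φ x

/-!
Suppose `u(x₀) < v(x₀)` and pick `0 < ε < v(x₀) - u(x₀)`. Test both inequalities with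
`w = ψ(v - u - ε)`, where `ψ` is smooth, nondecreasing and vanishes on `(-∞, 0]`; the hypothesis
on the sublevel sets of `u - v` makes `w` compactly supported in `Ω`. With the flux
`A(ξ) = |ξ|^{p-2} ξ + |ξ|^{q-2} ξ`, subtracting the two inequalities gives
`∫ ⟨A(∇u) - A(∇v), ∇w⟩ ≥ 0`, while pointwise this integrand equals
`-ψ'(v - u - ε) ⟨A(∇u) - A(∇v), ∇u - ∇v⟩ ≤ 0` by monotonicity of `A`. Being continuous, it
vanishes on `Ω`, and strict monotonicity of `A` then forces `∇w = 0`. A compactly supported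
function on `ℝ^N`, `N ≥ 1`, with vanishing gradient is zero, which contradicts
`w(x₀) = ψ(v(x₀) - u(x₀) - ε) > 0`.
-/

open Set Function Topology
open scoped InnerProductSpace Gradient

section Flux

variable {F : Type*} [NormedAddCommGroup F] [InnerProductSpace ℝ F] {e p q : ℝ}

lemma continuous_rpow_norm_smul (he : -1 < e) : Continuous fun a : F => ‖a‖ ^ e • a := by
  refine continuous_iff_continuousAt.2 fun a => ?_
  rcases eq_or_ne a 0 with rfl | ha
  · have hnorm : (fun x : F => ‖‖x‖ ^ e • x‖) = fun x => ‖x‖ ^ (e + 1) := by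
      funext x
      rw [norm_smul, Real.norm_of_nonneg (by positivity),
        Real.rpow_add_one' (norm_nonneg x) (by linarith)]
    have h := (continuous_norm.rpow_const fun _ => Or.inr (by linarith : 0 ≤ e + 1)).tendsto
      (0 : F)
    rw [norm_zero, Real.zero_rpow (by linarith), ← hnorm] at h
    simpa [ContinuousAt] using tendsto_zero_iff_norm_tendsto_zero.2 h
  · exact (continuous_norm.continuousAt.rpow_const (Or.inl (norm_ne_zero_iff.2 ha))).smul
      continuousAt_id

lemma inner_rpow_norm_smul_sub_eq (he : -1 < e) (a b : F) :
    ⟪‖a‖ ^ e • a - ‖b‖ ^ e • b, a - b⟫_ℝ =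
      (‖a‖ ^ (e + 1) - ‖b‖ ^ (e + 1)) * (‖a‖ - ‖b‖) +
        (‖a‖ ^ e + ‖b‖ ^ e) * (‖a‖ * ‖b‖ - ⟪a, b⟫_ℝ) := by
  rw [Real.rpow_add_one' (norm_nonneg a) (by linarith),
    Real.rpow_add_one' (norm_nonneg b) (by linarith)]
  simp only [inner_sub_left, inner_sub_right, real_inner_smul_left, real_inner_self_eq_norm_sq,
    real_inner_comm a b]
  ring

lemma rpow_sub_rpow_mul_sub_pos (he : -1 < e) {s t : ℝ} (hs : 0 ≤ s) (ht : 0 ≤ t)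
    (hst : s ≠ t) : 0 < (s ^ (e + 1) - t ^ (e + 1)) * (s - t) := by
  rcases hst.lt_or_gt with h | h
  · exact mul_pos_of_neg_of_neg (sub_neg.2 (Real.rpow_lt_rpow hs h (by linarith))) (sub_neg.2 h)
  · exact mul_pos (sub_pos.2 (Real.rpow_lt_rpow ht h (by linarith))) (sub_pos.2 h)

lemma inner_rpow_norm_smul_sub_pos (he : -1 < e) {a b : F} (hab : a ≠ b) :
    0 < ⟪‖a‖ ^ e • a - ‖b‖ ^ e • b, a - b⟫_ℝ := by
  rw [inner_rpow_norm_smul_sub_eq he]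
  have hcs : 0 ≤ ‖a‖ * ‖b‖ - ⟪a, b⟫_ℝ := sub_nonneg.2 (real_inner_le_norm a b)
  rcases eq_or_ne ‖a‖ ‖b‖ with h | h
  · have ha : 0 < ‖a‖ := by
      refine (norm_nonneg a).lt_of_ne fun h0 => hab ?_
      rw [norm_eq_zero.1 h0.symm, norm_eq_zero.1 (h.symm.trans h0.symm)]
    have hdefect : ‖a‖ * ‖b‖ - ⟪a, b⟫_ℝ = ‖a - b‖ ^ 2 / 2 := by
      rw [norm_sub_sq_real, ← h]
      ring
    have hab' : 0 < ‖a - b‖ := norm_pos_iff.2 (sub_ne_zero.2 hab)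
    rw [hdefect, h, sub_self, zero_mul, zero_add, ← h]
    positivity
  · exact add_pos_of_pos_of_nonneg
      (rpow_sub_rpow_mul_sub_pos he (norm_nonneg a) (norm_nonneg b) h)
      (mul_nonneg (by positivity) hcs)

def pqFlux (p q : ℝ) (ξ : F) : F := ‖ξ‖ ^ (p - 2) • ξ + ‖ξ‖ ^ (q - 2) • ξ

lemma continuous_pqFlux (hp : 1 < p) (hq : 1 < q) : Continuous (pqFlux p q : F → F) :=
  (continuous_rpow_norm_smul (by linarith)).add (continuous_rpow_norm_smul (by linarith))

lemma inner_pqFlux_sub_pos (hp : 1 < p) (hq : 1 < q) {a b : F} (hab : a ≠ b) :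
    0 < ⟪pqFlux p q a - pqFlux p q b, a - b⟫_ℝ := by
  have hsplit : pqFlux p q a - pqFlux p q b =
      (‖a‖ ^ (p - 2) • a - ‖b‖ ^ (p - 2) • b) + (‖a‖ ^ (q - 2) • a - ‖b‖ ^ (q - 2) • b) := by
    simp only [pqFlux]
    abel
  rw [hsplit, inner_add_left]
  exact add_pos (inner_rpow_norm_smul_sub_pos (by linarith) hab)
    (inner_rpow_norm_smul_sub_pos (by linarith) hab)

lemma inner_pqFlux_sub_nonneg (hp : 1 < p) (hq : 1 < q) (a b : F) :
    0 ≤ ⟪pqFlux p q a - pqFlux p q b, a - b⟫_ℝ := by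
  rcases eq_or_ne a b with rfl | hab
  · simp
  · exact (inner_pqFlux_sub_pos hp hq hab).le

end Flux

section Gradient

variable {E : Type*} [NormedAddCommGroup E] [InnerProductSpace ℝ E] [CompleteSpace E]
  {f g : E → ℝ} {f' g' x : E}

lemma HasGradientAt.sub (hf : HasGradientAt f f' x) (hg : HasGradientAt g g' x) :
    HasGradientAt (fun y => f y - g y) (f' - g') x := by
  rw [hasGradientAt_iff_hasFDerivAt, map_sub]
  exact hf.hasFDerivAt.sub hg.hasFDerivAt

lemma HasDerivAt.comp_hasGradientAt {ψ : ℝ → ℝ} {ψ' : ℝ} (hψ : HasDerivAt ψ ψ' (g x))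
    (hg : HasGradientAt g g' x) : HasGradientAt (ψ ∘ g) (ψ' • g') x := by
  rw [hasGradientAt_iff_hasFDerivAt, map_smul]
  exact hψ.comp_hasFDerivAt x hg.hasFDerivAt

lemma ContDiffOn.continuousOn_gradient {s : Set E} (hf : ContDiffOn ℝ 1 f s) (hs : IsOpen s) :
    ContinuousOn (∇ f) s :=
  (InnerProductSpace.toDual ℝ E).symm.continuous.comp_continuousOn
    (hf.continuousOn_fderiv_of_isOpen hs le_rfl)

lemma ContDiff.continuous_gradient (hf : ContDiff ℝ 1 f) : Continuous (∇ f) :=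
  (InnerProductSpace.toDual ℝ E).symm.continuous.comp (hf.continuous_fderiv one_ne_zero)

lemma gradient_eq_zero_of_notMem_tsupport (hx : x ∉ tsupport f) : ∇ f x = 0 := by
  rw [gradient, image_eq_zero_of_notMem_tsupport (mt (fun h => tsupport_fderiv_subset ℝ h) hx),
    map_zero]

lemma gradient_indicator_comp {Ω : Set E} {ψ : ℝ → ℝ} (hψ : Differentiable ℝ ψ) (hΩ : IsOpen Ω)
    (hx : x ∈ Ω) (hg : HasGradientAt g g' x) :
    ∇ (Ω.indicator (ψ ∘ g)) x = deriv ψ (g x) • g' := by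
  have hloc : Ω.indicator (ψ ∘ g) =ᶠ[𝓝 x] ψ ∘ g := by
    filter_upwards [hΩ.mem_nhds hx] with y hy using indicator_of_mem hy _
  rw [hloc.gradient_eq]
  exact ((hψ (g x)).hasDerivAt.comp_hasGradientAt hg).gradient

lemma HasCompactSupport.eq_zero_of_gradient_eq_zero [NoncompactSpace E] (hf : Differentiable ℝ f)
    (hc : HasCompactSupport f) (hgrad : ∀ x ∈ tsupport f, ∇ f x = 0) : f = 0 := by
  have hfderiv : ∀ x, fderiv ℝ f x = 0 := fun x => by
    by_cases hx : x ∈ tsupport f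
    · rw [← toDual_gradient, hgrad x hx, map_zero]
    · exact image_eq_zero_of_notMem_tsupport (mt (fun h => tsupport_fderiv_subset ℝ h) hx)
  obtain ⟨y, hy⟩ := (ne_univ_iff_exists_notMem _).1 hc.isCompact.ne_univ
  funext x
  rw [is_const_of_fderiv_eq_zero hf hfderiv x y, image_eq_zero_of_notMem_tsupport hy,
    Pi.zero_apply]

end Gradient

lemma support_indicator_subset_of_eqOn_zero {α M : Type*} [Zero M] {Ω K : Set α} {f : α → M}
    (hf0 : EqOn f 0 (Ω \ K)) : support (Ω.indicator f) ⊆ K := by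
  intro x hx
  rw [mem_support, indicator_apply_ne_zero] at hx
  by_contra hxK
  exact hx.2 (hf0 ⟨hx.1, hxK⟩)

lemma contDiff_indicator_of_eqOn_zero {E F : Type*} [NormedAddCommGroup E] [NormedSpace ℝ E]
    [NormedAddCommGroup F] [NormedSpace ℝ F] {Ω K : Set E} {f : E → F} {n : WithTop ℕ∞}
    (hΩ : IsOpen Ω) (hK : IsClosed K) (hKΩ : K ⊆ Ω) (hf : ContDiffOn ℝ n f Ω)
    (hf0 : EqOn f 0 (Ω \ K)) : ContDiff ℝ n (Ω.indicator f) := by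
  refine contDiff_iff_contDiffAt.2 fun x => ?_
  by_cases hx : x ∈ Ω
  · refine (hf.contDiffAt (hΩ.mem_nhds hx)).congr_of_eventuallyEq ?_
    filter_upwards [hΩ.mem_nhds hx] with y hy using indicator_of_mem hy f
  · refine (contDiffAt_const (c := (0 : F))).congr_of_eventuallyEq ?_
    filter_upwards [hK.isOpen_compl.mem_nhds fun h => hx (hKΩ h)] with y hy
    exact notMem_support.1 fun h => hy (support_indicator_subset_of_eqOn_zero hf0 h)

lemma IsOpen.eqOn_zero_of_nonpos_of_setIntegral_nonneg {X : Type*} [TopologicalSpace X]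
    [MeasurableSpace X] [OpensMeasurableSpace X] {μ : Measure X} [μ.IsOpenPosMeasure]
    {Ω : Set X} {F : X → ℝ} (hΩ : IsOpen Ω) (hF : ContinuousOn F Ω) (hint : IntegrableOn F Ω μ)
    (hle : ∀ x ∈ Ω, F x ≤ 0) (h : 0 ≤ ∫ x in Ω, F x ∂μ) : EqOn F 0 Ω := by
  have hnonneg : 0 ≤ᵐ[μ.restrict Ω] fun x => -F x :=
    (ae_restrict_mem hΩ.measurableSet).mono fun x hx => neg_nonneg.2 (hle x hx)
  have hzero : ∫ x in Ω, -F x ∂μ = 0 := by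
    rw [integral_neg, neg_eq_zero]
    exact le_antisymm (setIntegral_nonpos hΩ.measurableSet hle) h
  have hae := (setIntegral_eq_zero_iff_of_nonneg_ae hnonneg hint.neg).1 hzero
  exact Measure.eqOn_open_of_ae_eq (hae.mono fun x hx => neg_eq_zero.1 hx) hΩ hF continuousOn_const

section Integral

variable {E : Type*} [NormedAddCommGroup E] [InnerProductSpace ℝ E] [CompleteSpace E]
  [MeasurableSpace E] [BorelSpace E] {μ : Measure E} [IsFiniteMeasureOnCompacts μ] {Ω : Set E}
  {φ : E → ℝ}

lemma integrableOn_inner_gradient (hΩ : MeasurableSet Ω) {V : E → E} (hV : ContinuousOn V Ω)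
    (hφ : ContDiff ℝ 1 φ) (hφc : HasCompactSupport φ) (hφΩ : tsupport φ ⊆ Ω) :
    IntegrableOn (fun x => ⟪V x, ∇ φ x⟫_ℝ) Ω μ := by
  refine IntegrableOn.of_forall_sdiff_eq_zero (s := tsupport φ) ?_ hΩ fun x hx => ?_
  · exact ((hV.mono hφΩ).inner hφ.continuous_gradient.continuousOn).integrableOn_compact hφc
  · rw [gradient_eq_zero_of_notMem_tsupport hx.2, inner_zero_right]

lemma integral_add_eq_integral_inner_pqFlux {p q : ℝ} (hp : 1 < p) (hq : 1 < q) (hΩ : IsOpen Ω)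
    {u : E → ℝ} (hu : ContDiffOn ℝ 1 u Ω) (hφ : ContDiff ℝ 1 φ) (hφc : HasCompactSupport φ)
    (hφΩ : tsupport φ ⊆ Ω) :
    (∫ x in Ω, ‖∇ u x‖ ^ (p - 2) * ⟪∇ u x, ∇ φ x⟫_ℝ ∂μ) +
        ∫ x in Ω, ‖∇ u x‖ ^ (q - 2) * ⟪∇ u x, ∇ φ x⟫_ℝ ∂μ =
      ∫ x in Ω, ⟪pqFlux p q (∇ u x), ∇ φ x⟫_ℝ ∂μ := by
  have hint : ∀ e : ℝ, -1 < e →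
      IntegrableOn (fun x => ‖∇ u x‖ ^ e * ⟪∇ u x, ∇ φ x⟫_ℝ) Ω μ := fun e he => by
    simpa only [Function.comp_apply, real_inner_smul_left] using
      integrableOn_inner_gradient (μ := μ) hΩ.measurableSet
        ((continuous_rpow_norm_smul he).comp_continuousOn (hu.continuousOn_gradient hΩ))
        hφ hφc hφΩ
  rw [← integral_add (hint _ (by linarith)) (hint _ (by linarith))]
  simp only [pqFlux, inner_add_left, real_inner_smul_left]

end Integral

section Comparison

variable {N : ℕ} {p q : ℝ} {Ω : Set (EuclideanSpace ℝ (Fin N))}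
  {u v f w c : EuclideanSpace ℝ (Fin N) → ℝ}

theorem gradient_eq_zero_of_weakPQSuper_of_weakPQSub (hp : 1 < p) (hq : 1 < q) (hΩ : IsOpen Ω)
    (hu : ContDiffOn ℝ 1 u Ω) (hv : ContDiffOn ℝ 1 v Ω) (hsuper : WeakPQSuper N p q Ω u f)
    (hsub : WeakPQSub N p q Ω v f) (hw : ContDiff ℝ 1 w) (hwc : HasCompactSupport w)
    (hwΩ : tsupport w ⊆ Ω) (hw0 : ∀ x, 0 ≤ w x) (hc : ∀ x ∈ Ω, 0 ≤ c x)
    (hgrad : ∀ x ∈ Ω, ∇ w x = c x • (∇ v x - ∇ u x)) :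
    ∀ x ∈ Ω, ∇ w x = 0 := by
  have hflux : ∀ {z : EuclideanSpace ℝ (Fin N) → ℝ}, ContDiffOn ℝ 1 z Ω →
      ContinuousOn (fun x => pqFlux p q (∇ z x)) Ω := fun hz =>
    (continuous_pqFlux hp hq).comp_continuousOn (hz.continuousOn_gradient hΩ)
  have hint : ∀ {z : EuclideanSpace ℝ (Fin N) → ℝ}, ContDiffOn ℝ 1 z Ω →
      IntegrableOn (fun x => ⟪pqFlux p q (∇ z x), ∇ w x⟫_ℝ) Ω := fun hz =>
    integrableOn_inner_gradient hΩ.measurableSet (hflux hz) hw hwc hwΩ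
  set J := fun x => ⟪pqFlux p q (∇ u x) - pqFlux p q (∇ v x), ∇ w x⟫_ℝ
  have henergy : 0 ≤ ∫ x in Ω, J x := by
    have h := (hsub w hw hwc hwΩ hw0).trans (hsuper w hw hwc hwΩ hw0)
    rw [integral_add_eq_integral_inner_pqFlux hp hq hΩ hv hw hwc hwΩ,
      integral_add_eq_integral_inner_pqFlux hp hq hΩ hu hw hwc hwΩ] at h
    simp only [J, inner_sub_left]
    rw [integral_sub (hint hu) (hint hv)]
    linarith
  have hJ : ∀ x ∈ Ω, J x =
      -(c x * ⟪pqFlux p q (∇ u x) - pqFlux p q (∇ v x), ∇ u x - ∇ v x⟫_ℝ) := fun x hx => by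
    simp only [J]
    rw [hgrad x hx, real_inner_smul_right, ← neg_sub (∇ u x), inner_neg_right, mul_neg]
  have hJ0 : EqOn J 0 Ω := hΩ.eqOn_zero_of_nonpos_of_setIntegral_nonneg
    (((hflux hu).sub (hflux hv)).inner hw.continuous_gradient.continuousOn)
    (by simp only [J, inner_sub_left]; exact (hint hu).sub (hint hv))
    (fun x hx => by
      rw [hJ x hx]
      exact neg_nonpos.2 (mul_nonneg (hc x hx) (inner_pqFlux_sub_nonneg hp hq _ _)))
    henergy
  intro x hx
  have h := hJ0 hx
  rw [hJ x hx, Pi.zero_apply, neg_eq_zero] at h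
  rcases mul_eq_zero.1 h with hc0 | hflat
  · rw [hgrad x hx, hc0, zero_smul]
  · have heq : ∇ u x = ∇ v x := by
      by_contra hne
      exact (inner_pqFlux_sub_pos hp hq hne).ne' hflat
    rw [hgrad x hx, heq, sub_self, smul_zero]

end Comparison

theorem comparison_principle_pq_general
    (N : ℕ) (hN : 1 ≤ N) (p q : ℝ) (hq1 : 1 < q) (hqp : q < p)
    (Ω : Set (EuclideanSpace ℝ (Fin N))) (hΩo : IsOpen Ω)
    (f : EuclideanSpace ℝ (Fin N) → ℝ)
    (u v : EuclideanSpace ℝ (Fin N) → ℝ)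
    (hu : ContDiffOn ℝ 1 u Ω) (hv : ContDiffOn ℝ 1 v Ω)
    (hsuper : WeakPQSuper N p q Ω u f)
    (hsub : WeakPQSub N p q Ω v f)
    (hbdry : ∀ ε > (0 : ℝ), IsCompact {x ∈ Ω | u x - v x + ε ≤ 0}) :
    ∀ x ∈ Ω, v x ≤ u x := by
  have : Nonempty (Fin N) := ⟨⟨0, hN⟩⟩
  intro x₀ hx₀
  by_contra! hlt
  obtain ⟨ε, hε, hεlt⟩ := exists_between (sub_pos.2 hlt)
  set K := {x ∈ Ω | u x - v x + ε ≤ 0}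
  have hK : IsCompact K := hbdry ε hε
  have hKΩ : K ⊆ Ω := sep_subset _ _
  set g := fun x => v x - u x - ε
  set w := Ω.indicator (expNegInvGlue ∘ g)
  have hg0 : EqOn (expNegInvGlue ∘ g) 0 (Ω \ K) := fun x hx =>
    expNegInvGlue.zero_of_nonpos (by linarith [not_le.1 fun h => hx.2 ⟨hx.1, h⟩])
  have hwK : tsupport w ⊆ K :=
    closure_minimal (support_indicator_subset_of_eqOn_zero hg0) hK.isClosed
  have hwc : HasCompactSupport w := hK.of_isClosed_subset isClosed_closure hwK
  have hw : ContDiff ℝ 1 w := contDiff_indicator_of_eqOn_zero hΩo hK.isClosed hKΩ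
    (expNegInvGlue.contDiff.comp_contDiffOn ((hv.sub hu).sub contDiffOn_const)) hg0
  have hgrad : ∀ x ∈ Ω, ∇ w x = deriv expNegInvGlue (g x) • (∇ v x - ∇ u x) := by
    intro x hx
    have hd := fun z (hz : ContDiffOn ℝ 1 z Ω) =>
      ((hz.differentiableOn one_ne_zero).differentiableAt (hΩo.mem_nhds hx)).hasGradientAt
    simpa using gradient_indicator_comp (expNegInvGlue.contDiff.differentiable one_ne_zero) hΩo
      hx (((hd v hv).sub (hd u hu)).sub (hasGradientAt_const x ε))
  have hflat := gradient_eq_zero_of_weakPQSuper_of_weakPQSub (hq1.trans hqp) hq1 hΩo hu hv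
    hsuper hsub hw hwc (hwK.trans hKΩ) (indicator_nonneg fun y _ => expNegInvGlue.nonneg _)
    (fun x _ => expNegInvGlue.monotone.deriv_nonneg) hgrad
  have hw0 := hwc.eq_zero_of_gradient_eq_zero (hw.differentiable one_ne_zero)
    fun x hx => hflat x (hKΩ (hwK hx))
  have hwx₀ : w x₀ = 0 := congr_fun hw0 x₀
  simp only [w, indicator_of_mem hx₀, Function.comp_apply, g] at hwx₀
  exact (expNegInvGlue.pos_of_pos (by linarith)).ne' hwx₀

/-- Comparison principle for the `(p,q)`-Laplacian. -/
theorem comparison_principle_pq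
    (N : ℕ) (hN : 1 ≤ N) (p q : ℝ) (hq1 : 1 < q) (hqp : q < p)
    (Ω : Set (EuclideanSpace ℝ (Fin N))) (hΩo : IsOpen Ω) (hΩc : IsConnected Ω)
    (f : EuclideanSpace ℝ (Fin N) → ℝ)
    (hf : ∀ K ⊆ Ω, IsCompact K →
      MemLp f (ENNReal.ofReal (p * N / (p * N + p - N))) (volume.restrict K))
    (u v : EuclideanSpace ℝ (Fin N) → ℝ)
    (hu : ContDiffOn ℝ 1 u Ω) (hv : ContDiffOn ℝ 1 v Ω)
    (hsuper : WeakPQSuper N p q Ω u f)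
    (hsub : WeakPQSub N p q Ω v f)
    (hbdry : ∀ ε > (0 : ℝ), IsCompact {x ∈ Ω | u x - v x + ε ≤ 0}) :
    ∀ x ∈ Ω, v x ≤ u x :=
  comparison_principle_pq_general N hN p q hq1 hqp Ω hΩo f u v hu hv hsuper hsub hbdry
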